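/- For all u₁, u₂ ∈ (0,1/2) with u₁ ≤ u₂, one has J(u₂)/L(u₂) ≤ J(u₁)/L(u₁). (Equivalently, the function x ↦ J(L⁻¹(x))/x is nonincreasing on (0,∞).) -/

import Mathlib

/-- Binary entropy function. -/
noncomputable def H2 (x : ℝ) : ℝ := -x * Real.logb 2 x - (1 - x) * Real.logb 2 (1 - x)

/-- `J`, the derivative of the binary entropy function. -/
noncomputable def J (x : ℝ) : ℝ := Real.logb 2 ((1 - x) / x)

/-- `L(u) = 2·H₂(u)/(1 − 2u)` for `u ∈ [0,1/2)` (with `L(0) = 0`). -/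
noncomputable def L (u : ℝ) : ℝ := 2 * H2 u / (1 - 2 * u)

/-! `J u / L u = J u * (1 - 2u) / (2 H₂ u)`, and on `(0, 1/2)` each of `J u`, `1 - 2u` and
`1 / H₂ u` is positive and nonincreasing (`H₂` increases up to `1/2`), hence so is their product. -/

open Real Set

lemma H2_eq_binEntropy_div_log_two (x : ℝ) : H2 x = binEntropy x / log 2 := by
  simp only [H2, binEntropy, logb, log_inv]
  ring

lemma H2_pos {x : ℝ} (h₀ : 0 < x) (h₁ : x < 1) : 0 < H2 x := by
  rw [H2_eq_binEntropy_div_log_two]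
  exact div_pos (binEntropy_pos h₀ h₁) (log_pos one_lt_two)

lemma H2_monotoneOn : MonotoneOn H2 (Icc 0 2⁻¹) := fun x hx y hy hxy => by
  simp only [H2_eq_binEntropy_div_log_two]
  exact div_le_div_of_nonneg_right (binEntropy_strictMonoOn.monotoneOn hx hy hxy)
    (log_nonneg one_le_two)

lemma J_pos {x : ℝ} (h₀ : 0 < x) (h : x < 1 / 2) : 0 < J x :=
  logb_pos one_lt_two ((one_lt_div h₀).2 (by linarith))

lemma J_antitoneOn : AntitoneOn J (Ioo 0 1) := fun x ⟨hx₀, hx₁⟩ y ⟨hy₀, hy₁⟩ hxy =>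
  (logb_le_logb one_lt_two (div_pos (by linarith) hy₀) (div_pos (by linarith) hx₀)).2
    (div_le_div₀ (by linarith) (by linarith) hx₀ hxy)

theorem stmt16 (u₁ u₂ : ℝ)
    (hu₁ : u₁ ∈ Set.Ioo (0 : ℝ) (1 / 2)) (hu₂ : u₂ ∈ Set.Ioo (0 : ℝ) (1 / 2))
    (h : u₁ ≤ u₂) :
    J u₂ / L u₂ ≤ J u₁ / L u₁ := by
  obtain ⟨hu₁0, hu₁2⟩ := hu₁
  obtain ⟨hu₂0, hu₂2⟩ := hu₂
  have hJ : J u₂ ≤ J u₁ := J_antitoneOn ⟨hu₁0, by linarith⟩ ⟨hu₂0, by linarith⟩ h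
  have hH : H2 u₁ ≤ H2 u₂ :=
    H2_monotoneOn ⟨hu₁0.le, by linarith⟩ ⟨hu₂0.le, by linarith⟩ h
  rw [L, L, div_div_eq_mul_div, div_div_eq_mul_div]
  have hJ₁ := J_pos hu₁0 hu₁2
  have hH₁ := H2_pos hu₁0 (by linarith)
  gcongr ?_ * ?_ / (2 * ?_)
  · exact mul_nonneg hJ₁.le (by linarith)
  all_goals linarith
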